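/- Under the SS-HOPM iteration with α > β(A), if A has finitely many real eigenvectors on the unit sphere, then the iterate sequence {x_k} converges to a single eigenvector x_*. -/

import Mathlib

noncomputable section
open scoped BigOperators
open Metric Filter

abbrev En (n : ℕ) := EuclideanSpace ℝ (Fin n)

def Symm {m n : ℕ} (A : (Fin m → Fin n) → ℝ) : Prop :=
  ∀ (p : Equiv.Perm (Fin m)) (i : Fin m → Fin n), A (i ∘ p) = A i

def tmul {m n : ℕ} (A : (Fin m → Fin n) → ℝ) (x : En n) : ℝ :=
  ∑ i : Fin m → Fin n, A i * ∏ k, x (i k)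

def tvec {m n : ℕ} (A : (Fin (m+1) → Fin n) → ℝ) (x : En n) : En n :=
  WithLp.toLp 2 (fun j => ∑ i : Fin m → Fin n, A (Fin.cons j i) * ∏ k, x (i k))

def tmat {m n : ℕ} (A : (Fin (m+2) → Fin n) → ℝ) (x : En n) : Matrix (Fin n) (Fin n) ℝ :=
  fun j k => ∑ i : Fin m → Fin n, A (Fin.cons j (Fin.cons k i)) * ∏ l, x (i l)

def quadForm {n : ℕ} (M : Matrix (Fin n) (Fin n) ℝ) (y : En n) : ℝ :=
  ∑ j, ∑ k, y j * M j k * y k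

def srad {n : ℕ} (M : Matrix (Fin n) (Fin n) ℝ) : ℝ :=
  ⨆ y : sphere (0 : En n) 1, |quadForm M (y : En n)|

def beta {m n : ℕ} (A : (Fin (m+2) → Fin n) → ℝ) : ℝ :=
  ((m:ℝ)+1) * ⨆ x : sphere (0 : En n) 1, srad (tmat A (x : En n))

open scoped Topology RealInnerProductSpace

/-!
Write `f = tmul A`, `g z = tvec A z + α • z` and `S = ⨆ ‖z‖ = 1, srad (tmat A z)`, so that
`β(A) = (m + 1) S` and the Hessian of `f` at `u` is bounded by `(m + 1)(m + 2) S ‖u‖ ^ m`.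
For `α ≥ (m + 1) S` the function `f + α ‖·‖ ^ (m + 2)` is therefore convex, and its gradient
inequality at a unit vector `z`, applied to the next iterate `‖g z‖⁻¹ • g z`, gives
`f(x (k+1)) - f(x k) ≥ (m + 2)(α - S)/2 · ‖x (k+1) - x k‖²`.
So `f(x k)` increases to a limit and the steps `‖x (k+1) - x k‖` tend to `0`. Every cluster point
of the iterates is a fixed point of the continuous iteration map, hence a unit eigenvector; there
are finitely many of them, and a sequence with vanishing steps converges to any isolated cluster
point.
-/

section Tensor

variable {M n : ℕ}

def contract (A : (Fin (M + 1) → Fin n) → ℝ) (d : En n) : (Fin M → Fin n) → ℝ :=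
  fun i => ∑ j, d j * A (Fin.cons j i)

def multilinForm (A : (Fin M → Fin n) → ℝ) (z : Fin M → En n) : ℝ :=
  ∑ i, A i * ∏ k, z k (i k)

lemma symm_contract {A : (Fin (M + 1) → Fin n) → ℝ} (hA : Symm A) (d : En n) :
    Symm (contract A d) := by
  intro p i
  refine Finset.sum_congr rfl fun j _ => ?_
  have hcons : (Fin.cons j (i ∘ p) : Fin (M + 1) → Fin n) =
      Fin.cons j i ∘ Equiv.Perm.decomposeFin.symm (0, p) := by
    ext l
    refine Fin.cases ?_ (fun l => ?_) l
    · simp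
    · simp [Equiv.Perm.decomposeFin_symm_apply_succ]
  rw [hcons, hA]

lemma multilinForm_comp_perm {A : (Fin M → Fin n) → ℝ} (hA : Symm A)
    (σ : Equiv.Perm (Fin M)) (z : Fin M → En n) :
    multilinForm A (z ∘ σ) = multilinForm A z := by
  refine (Fintype.sum_equiv (σ.symm.arrowCongr (Equiv.refl _)) _ _ fun i => ?_).symm
  change A i * ∏ k, z k (i k) = A (i ∘ σ) * ∏ k, z (σ k) (i (σ k))
  rw [hA, Equiv.prod_comp σ (fun k => z k (i k))]

lemma sum_fin_cons {α β : Type*} [Fintype α] [AddCommMonoid β] (f : (Fin (M + 1) → α) → β) :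
    ∑ i, f i = ∑ j, ∑ i, f (Fin.cons j i) := by
  rw [← (Fin.consEquiv fun _ => α).sum_comp, Fintype.sum_prod_type]
  rfl

lemma multilinForm_update (A : (Fin M → Fin n) → ℝ) (z : Fin M → En n) (k : Fin M)
    (d : En n) :
    multilinForm A (Function.update z k d) =
      ∑ i, A i * ((∏ l ∈ Finset.univ.erase k, z l (i l)) * d (i k)) := by
  refine Finset.sum_congr rfl fun i _ => ?_
  simp only [Function.apply_update (fun l (w : En n) => w (i l)),
    Finset.prod_update_of_mem (Finset.mem_univ k), Finset.sdiff_singleton_eq_erase]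
  ring

lemma multilinForm_update_const_zero (A : (Fin (M + 1) → Fin n) → ℝ) (v d : En n) :
    multilinForm A (Function.update (fun _ => v) 0 d) = tmul (contract A d) v := by
  simp only [multilinForm, tmul, contract, Finset.sum_mul, Fin.prod_univ_succ, sum_fin_cons,
    Fin.cons_zero, Fin.cons_succ, Function.update_self,
    Function.update_of_ne (Fin.succ_ne_zero _)]
  rw [Finset.sum_comm]
  exact Finset.sum_congr rfl fun j _ => Finset.sum_congr rfl fun i _ => by ring

lemma multilinForm_update_const {A : (Fin (M + 1) → Fin n) → ℝ} (hA : Symm A) (v d : En n)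
    (k : Fin (M + 1)) :
    multilinForm A (Function.update (fun _ => v) k d) = tmul (contract A d) v := by
  rw [← multilinForm_update_const_zero, ← multilinForm_comp_perm hA (Equiv.swap 0 k),
    Function.update_comp_equiv]
  simp only [Equiv.symm_swap, Equiv.swap_apply_right]
  rfl

lemma tmul_contract_self (A : (Fin (M + 1) → Fin n) → ℝ) (v : En n) :
    tmul (contract A v) v = tmul A v := by
  rw [← multilinForm_update_const_zero, Function.update_eq_self]
  rfl

lemma tmul_contract_eq_inner_tvec (A : (Fin (M + 1) → Fin n) → ℝ) (d u : En n) :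
    tmul (contract A d) u = ⟪d, tvec A u⟫ := by
  simp only [tmul, contract, tvec, PiLp.inner_apply, RCLike.inner_apply, conj_trivial,
    Finset.sum_mul]
  rw [Finset.sum_comm]
  exact Finset.sum_congr rfl fun j _ => Finset.sum_congr rfl fun i _ => by ring

lemma tmul_contract_contract_eq_quadForm (A : (Fin (M + 2) → Fin n) → ℝ) (d u : En n) :
    tmul (contract (contract A d) d) u = quadForm (tmat A u) d := by
  simp only [tmul, contract, tmat, quadForm, Finset.sum_mul, Finset.mul_sum]
  rw [Finset.sum_comm]
  refine (Finset.sum_congr rfl fun k _ => Finset.sum_comm).trans ?_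
  rw [Finset.sum_comm]
  exact Finset.sum_congr rfl fun j _ => Finset.sum_congr rfl fun k _ =>
    Finset.sum_congr rfl fun i _ => by ring

lemma tmul_eq_quadForm (A : (Fin (M + 2) → Fin n) → ℝ) (u : En n) :
    tmul A u = quadForm (tmat A u) u := by
  rw [← tmul_contract_contract_eq_quadForm, tmul_contract_self, tmul_contract_self]

lemma hasDerivAt_tmul_add_smul (A : (Fin M → Fin n) → ℝ) (u d : En n) (t : ℝ) :
    HasDerivAt (fun s => tmul A (u + s • d))
      (∑ k, multilinForm A (Function.update (fun _ => u + t • d) k d)) t := by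
  have hterm (i : Fin M → Fin n) : HasDerivAt (fun s => A i * ∏ k, (u + s • d) (i k))
      (A i * ∑ k, (∏ l ∈ Finset.univ.erase k, (u + t • d) (i l)) * d (i k)) t :=
    (HasDerivAt.fun_finsetProd fun k _ =>
      (hasDerivAt_mul_const (d (i k))).const_add (u (i k))).const_mul (A i)
  refine (HasDerivAt.fun_sum fun i _ => hterm i).congr_deriv ?_
  simp only [multilinForm_update, Finset.mul_sum]
  exact Finset.sum_comm

-- By symmetry all `M + 1` terms of the product rule coincide.
lemma hasDerivAt_tmul_add_smul_of_symm {A : (Fin (M + 1) → Fin n) → ℝ} (hA : Symm A)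
    (u d : En n) (t : ℝ) :
    HasDerivAt (fun s => tmul A (u + s • d)) ((M + 1) * tmul (contract A d) (u + t • d)) t := by
  refine (hasDerivAt_tmul_add_smul A u d t).congr_deriv ?_
  simp [multilinForm_update_const hA]

end Tensor

section InnerProductSpace

variable {F : Type*} [NormedAddCommGroup F] [InnerProductSpace ℝ F] {x d : F} {t : ℝ}

lemma HasDerivAt.norm {f : ℝ → F} {f' : F} (hf : HasDerivAt f f' t) (h0 : f t ≠ 0) :
    HasDerivAt (fun s => ‖f s‖) (⟪f t, f'⟫ / ‖f t‖) t := by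
  have h := hf.norm_sq.sqrt (by positivity)
  simp only [Real.sqrt_sq (norm_nonneg _)] at h
  convert h using 1
  field_simp

lemma hasDerivAt_add_smul (x d : F) (t : ℝ) : HasDerivAt (fun s => x + s • d) d t := by
  simpa using ((hasDerivAt_id t).smul_const d).const_add x

lemma hasDerivAt_norm_add_smul_pow (h0 : x + t • d ≠ 0) (k : ℕ) :
    HasDerivAt (fun s => ‖x + s • d‖ ^ (k + 2))
      ((k + 2) * (‖x + t • d‖ ^ k * ⟪x + t • d, d⟫)) t := by
  refine (((hasDerivAt_add_smul x d t).norm h0).fun_pow (k + 2)).congr_deriv ?_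
  have : ‖x + t • d‖ ≠ 0 := norm_ne_zero_iff.mpr h0
  field_simp
  push_cast
  ring

lemma hasDerivAt_norm_add_smul_pow_mul_inner (h0 : x + t • d ≠ 0) (k : ℕ) :
    HasDerivAt (fun s => ‖x + s • d‖ ^ k * ⟪x + s • d, d⟫)
      (k * ‖x + t • d‖ ^ (k - 1) * (⟪x + t • d, d⟫ / ‖x + t • d‖) * ⟪x + t • d, d⟫
        + ‖x + t • d‖ ^ k * ‖d‖ ^ 2) t := by
  refine ((((hasDerivAt_add_smul x d t).norm h0).fun_pow k).mul
    ((hasDerivAt_add_smul x d t).inner ℝ (hasDerivAt_const t d))).congr_deriv ?_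
  simp

lemma add_smul_sub_ne_zero {y : F} (hx : ‖x‖ = 1) (hy : ‖y‖ = 1) (hxy : y ≠ -x) (t : ℝ) :
    x + t • (y - x) ≠ 0 := by
  intro h
  have h1 : (1 - t) • x = -(t • y) := by
    linear_combination (norm := module) h
  have h2 : |1 - t| = |t| := by
    simpa [norm_smul, hx, hy] using congrArg norm h1
  have ht : t = 1 / 2 := by
    rcases abs_eq_abs.mp h2 with h3 | h3 <;> linarith
  apply hxy
  subst ht
  linear_combination (norm := module) (2 : ℝ) • h

lemma inner_smul_inv_norm_sub {z g : F} (hz : ‖z‖ = 1) (hg : g ≠ 0) :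
    ⟪‖g‖⁻¹ • g - z, g⟫ = ‖g‖ / 2 * ‖‖g‖⁻¹ • g - z‖ ^ 2 := by
  have hg' : ‖g‖ ≠ 0 := norm_ne_zero_iff.mpr hg
  have hy : ‖‖g‖⁻¹ • g‖ = 1 := norm_smul_inv_norm (𝕜 := ℝ) hg
  have hyg : ⟪‖g‖⁻¹ • g, g⟫ = ‖g‖ := by
    rw [real_inner_smul_left, real_inner_self_eq_norm_sq]
    field_simp
  have hzg : ⟪z, g⟫ = ‖g‖ * ⟪‖g‖⁻¹ • g, z⟫ := by
    rw [real_inner_smul_left, real_inner_comm]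
    field_simp
  rw [inner_sub_left, norm_sub_sq_real, hy, hz, hyg, hzg]
  ring

end InnerProductSpace

lemma le_sub_of_hasDerivAt_of_hasDerivAt_nonneg {f f' f'' : ℝ → ℝ}
    (hf : ∀ t, HasDerivAt f (f' t) t) (hf' : ∀ t, HasDerivAt f' (f'' t) t)
    (hf'' : ∀ t, 0 ≤ f'' t) : f' 0 ≤ f 1 - f 0 := by
  have hmono : Monotone f' := monotone_of_deriv_nonneg (fun t => (hf' t).differentiableAt)
    fun t => (hf' t).deriv ▸ hf'' t
  obtain ⟨c, hc, hslope⟩ := exists_hasDerivAt_eq_slope f f' one_pos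
    (continuous_iff_continuousAt.mpr fun t => (hf t).continuousAt).continuousOn fun t _ => hf t
  calc f' 0 ≤ f' c := hmono hc.1.le
    _ = f 1 - f 0 := by rw [hslope]; ring

-- Convexity of `tmul A + α ‖·‖ ^ (m + 2)` along the segment `[x, y]`, which avoids `0`.
lemma mul_inner_le_tmul_sub {m n : ℕ} {A : (Fin (m + 2) → Fin n) → ℝ} (hA : Symm A)
    {S α : ℝ} (hS0 : 0 ≤ S)
    (hS : ∀ u : En n, u ≠ 0 → ∀ y, |quadForm (tmat A u) y| ≤ S * ‖u‖ ^ m * ‖y‖ ^ 2)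
    (hα : (m + 1) * S ≤ α) {x y : En n} (hx : ‖x‖ = 1) (hy : ‖y‖ = 1) (hxy : y ≠ -x) :
    (m + 2) * ⟪y - x, tvec A x + α • x⟫ ≤ tmul A y - tmul A x := by
  set d := y - x
  have hv : ∀ t : ℝ, x + t • d ≠ 0 := add_smul_sub_ne_zero hx hy hxy
  have hG (t : ℝ) : HasDerivAt (fun s => tmul A (x + s • d) + α * ‖x + s • d‖ ^ (m + 2))
      ((m + 2) * (tmul (contract A d) (x + t • d) + α * (‖x + t • d‖ ^ m * ⟪x + t • d, d⟫))) t := by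
    refine ((hasDerivAt_tmul_add_smul_of_symm hA x d t).add
      ((hasDerivAt_norm_add_smul_pow (hv t) m).const_mul α)).congr_deriv ?_
    push_cast
    ring
  have hG' (t : ℝ) : ∃ c, HasDerivAt (fun s => (m + 2) * (tmul (contract A d) (x + s • d)
      + α * (‖x + s • d‖ ^ m * ⟪x + s • d, d⟫))) c t ∧ 0 ≤ c := by
    refine ⟨_, (((hasDerivAt_tmul_add_smul_of_symm (symm_contract hA d) x d t).add
      ((hasDerivAt_norm_add_smul_pow_mul_inner (hv t) m).const_mul α)).const_mul _), ?_⟩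
    have hq := (abs_le.mp (hS _ (hv t) d)).1
    rw [tmul_contract_contract_eq_quadForm]
    have hr : 0 ≤ m * ‖x + t • d‖ ^ (m - 1) * (⟪x + t • d, d⟫ / ‖x + t • d‖) * ⟪x + t • d, d⟫ := by
      rw [mul_assoc, div_mul_eq_mul_div, ← sq]
      positivity
    have hα0 : 0 ≤ α := le_trans (by positivity) hα
    have hN := mul_le_mul_of_nonneg_right hα (by positivity : 0 ≤ ‖x + t • d‖ ^ m * ‖d‖ ^ 2)
    exact mul_nonneg (by positivity) (by nlinarith [mul_nonneg hα0 hr])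
  choose G'' hG'' hG''_nonneg using hG'
  have key := le_sub_of_hasDerivAt_of_hasDerivAt_nonneg hG hG'' hG''_nonneg
  have hxd : x + d = y := add_sub_cancel x y
  simp only [zero_smul, add_zero, one_smul, hxd, hx, hy, one_pow, one_mul, mul_one,
    tmul_contract_eq_inner_tvec] at key
  rw [inner_add_right, inner_smul_right, real_inner_comm x]
  linarith

section TensorBound

variable {m n : ℕ} (A : (Fin (m + 2) → Fin n) → ℝ)

def tmatSup : ℝ := ⨆ z : sphere (0 : En n) 1, srad (tmat A z)

lemma beta_eq_mul_tmatSup : beta A = (m + 1) * tmatSup A := rfl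

lemma tmatSup_nonneg : 0 ≤ tmatSup A :=
  Real.iSup_nonneg fun _ => Real.iSup_nonneg fun _ => abs_nonneg _

lemma continuous_quadForm_tmat :
    Continuous fun p : En n × En n => quadForm (tmat A p.1) p.2 := by
  unfold quadForm tmat
  fun_prop

lemma abs_quadForm_le_srad (M : Matrix (Fin n) (Fin n) ℝ) {y : En n} (hy : ‖y‖ = 1) :
    |quadForm M y| ≤ srad M := by
  have hcont : Continuous fun y : sphere (0 : En n) 1 => |quadForm M y| := by
    unfold quadForm
    fun_prop
  exact le_ciSup (isCompact_range hcont).bddAbove ⟨y, by simpa using hy⟩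

lemma abs_quadForm_tmat_le_tmatSup {z y : En n} (hz : ‖z‖ = 1) (hy : ‖y‖ = 1) :
    |quadForm (tmat A z) y| ≤ tmatSup A := by
  have hcont : Continuous fun p : sphere (0 : En n) 1 × sphere (0 : En n) 1 =>
      |quadForm (tmat A p.1) p.2| :=
    ((continuous_quadForm_tmat A).comp
      ((continuous_subtype_val.comp continuous_fst).prodMk
        (continuous_subtype_val.comp continuous_snd))).abs
  obtain ⟨B, hB⟩ := (isCompact_range hcont).bddAbove
  have : Nonempty (sphere (0 : En n) 1) := ⟨⟨y, by simpa using hy⟩⟩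
  have hsrad (w : sphere (0 : En n) 1) : srad (tmat A w) ≤ B :=
    ciSup_le fun v => hB ⟨(w, v), rfl⟩
  refine (abs_quadForm_le_srad _ hy).trans
    (le_ciSup (f := fun w : sphere (0 : En n) 1 => srad (tmat A w)) ⟨B, ?_⟩ ⟨z, by simpa using hz⟩)
  rintro _ ⟨w, rfl⟩
  exact hsrad w

lemma quadForm_tmat_smul_smul (a b : ℝ) (u y : En n) :
    quadForm (tmat A (a • u)) (b • y) = a ^ m * b ^ 2 * quadForm (tmat A u) y := by
  simp only [quadForm, tmat, PiLp.smul_apply, smul_eq_mul, Finset.prod_mul_distrib,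
    Finset.prod_const, Finset.card_univ, Fintype.card_fin, Finset.mul_sum, Finset.sum_mul]
  exact Finset.sum_congr rfl fun j _ => Finset.sum_congr rfl fun k _ =>
    Finset.sum_congr rfl fun i _ => by ring

lemma abs_quadForm_tmat_le {u : En n} (hu : u ≠ 0) (y : En n) :
    |quadForm (tmat A u) y| ≤ tmatSup A * ‖u‖ ^ m * ‖y‖ ^ 2 := by
  rcases eq_or_ne y 0 with rfl | hy
  · simp [quadForm]
  have h := quadForm_tmat_smul_smul A ‖u‖ ‖y‖ (‖u‖⁻¹ • u) (‖y‖⁻¹ • y)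
  rw [smul_inv_smul₀ (norm_ne_zero_iff.mpr hu), smul_inv_smul₀ (norm_ne_zero_iff.mpr hy)] at h
  calc |quadForm (tmat A u) y|
      = ‖u‖ ^ m * ‖y‖ ^ 2 * |quadForm (tmat A (‖u‖⁻¹ • u)) (‖y‖⁻¹ • y)| := by
        rw [h, abs_mul, abs_of_nonneg (by positivity)]
    _ ≤ ‖u‖ ^ m * ‖y‖ ^ 2 * tmatSup A := by
        gcongr
        exact abs_quadForm_tmat_le_tmatSup A (norm_smul_inv_norm (𝕜 := ℝ) hu)
          (norm_smul_inv_norm (𝕜 := ℝ) hy)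
    _ = tmatSup A * ‖u‖ ^ m * ‖y‖ ^ 2 := by ring

end TensorBound

section Sequences

lemma tendsto_zero_of_mul_sq_le_sub_succ {L d : ℕ → ℝ} {c : ℝ} (hc : 0 < c)
    (hL : BddAbove (Set.range L)) (h : ∀ k, c * d k ^ 2 ≤ L (k + 1) - L k) :
    Tendsto d atTop (𝓝 0) := by
  have hmono : Monotone L := monotone_nat_of_le_succ fun k => by
    nlinarith [h k, sq_nonneg (d k)]
  have hlim := tendsto_atTop_ciSup hmono hL
  have hinc : Tendsto (fun k => (L (k + 1) - L k) / c) atTop (𝓝 0) := by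
    simpa using ((hlim.comp (tendsto_add_atTop_nat 1)).sub hlim).div_const c
  have hsq : Tendsto (fun k => d k ^ 2) atTop (𝓝 0) :=
    squeeze_zero (fun k => sq_nonneg _) (fun k => (le_div_iff₀' hc).mpr (h k)) hinc
  have habs := (Real.continuous_sqrt.tendsto 0).comp hsq
  simp only [Function.comp_def, Real.sqrt_sq_eq_abs, Real.sqrt_zero] at habs
  exact (tendsto_zero_iff_abs_tendsto_zero d).mpr habs

lemma MapClusterPt.isFixedPt_of_tendsto_dist {X : Type*} [MetricSpace X] {T : X → X}
    {u : ℕ → X} {p : X} (hp : MapClusterPt p atTop u) (hT : ContinuousAt T p)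
    (hu : ∀ k, u (k + 1) = T (u k))
    (hd : Tendsto (fun k => dist (u (k + 1)) (u k)) atTop (𝓝 0)) :
    Function.IsFixedPt T p := by
  obtain ⟨φ, hφ, hlim⟩ := hp.tendsto_subseq
  have hnext : Tendsto (fun k => u (φ k + 1)) atTop (𝓝 p) :=
    hlim.congr_dist (by simpa only [dist_comm, Function.comp_def] using hd.comp hφ.tendsto_atTop)
  exact tendsto_nhds_unique ((hT.tendsto.comp hlim).congr fun k => (hu _).symm) hnext

lemma eventually_notMem_of_forall_not_mapClusterPt {X ι : Type*} [TopologicalSpace X]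
    {l : Filter ι} {u : ι → X} {K : Set X} (hK : IsCompact K)
    (h : ∀ q ∈ K, ¬MapClusterPt q l u) : ∀ᶠ k in l, u k ∉ K := by
  by_contra hfreq
  rw [not_eventually] at hfreq
  simp only [not_not] at hfreq
  obtain ⟨q, hqK, hq⟩ := hK.exists_mapClusterPt_of_frequently hfreq
  exact h q hqK hq

/- The annulus `δ ≤ dist · p ≤ 2δ` is compact and free of cluster points, so the sequence
eventually avoids it; once its steps are shorter than `δ`, it cannot leave `ball p δ`. -/
lemma tendsto_of_mapClusterPt_of_isolated {X : Type*} [PseudoMetricSpace X] [ProperSpace X]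
    {u : ℕ → X} {p : X} (hd : Tendsto (fun k => dist (u (k + 1)) (u k)) atTop (𝓝 0))
    (hp : MapClusterPt p atTop u) (hiso : ∀ᶠ q in 𝓝 p, MapClusterPt q atTop u → q = p) :
    Tendsto u atTop (𝓝 p) := by
  obtain ⟨r, hr, hiso⟩ := Metric.eventually_nhds_iff.mp hiso
  rw [Metric.tendsto_nhds]
  intro ε hε
  set δ := min ε (r / 3)
  have hδ : 0 < δ := lt_min hε (by positivity)
  have hann : ∀ᶠ k in atTop, u k ∉ closedBall p (2 * δ) \ ball p δ := by
    refine eventually_notMem_of_forall_not_mapClusterPt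
      ((isCompact_closedBall p _).diff isOpen_ball) fun q hq hcl => hq.2 ?_
    have hqp : dist q p < r := by
      linarith [mem_closedBall.mp hq.1, min_le_right ε (r / 3)]
    rw [hiso hqp hcl]
    exact mem_ball_self hδ
  have hsmall : ∀ᶠ k in atTop, dist (u (k + 1)) (u k) < δ := hd (Iio_mem_nhds hδ)
  obtain ⟨N, hN⟩ := eventually_atTop.mp (hann.and hsmall)
  obtain ⟨k₀, hk₀N, hk₀⟩ := frequently_atTop.mp (hp.frequently (ball_mem_nhds p hδ)) N
  have hstay : ∀ k ≥ k₀, dist (u k) p < δ := by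
    refine Nat.le_induction hk₀ fun k hk ih => ?_
    by_contra hfar
    refine (hN (k + 1) (by omega)).1 ⟨mem_closedBall.mpr ?_, hfar⟩
    linarith [dist_triangle (u (k + 1)) (u k) p, (hN k (by omega)).2]
  filter_upwards [eventually_ge_atTop k₀] with k hk
  exact (hstay k hk).trans_le (min_le_left _ _)

lemma tendsto_of_mapClusterPt_of_finite {X : Type*} [MetricSpace X] [ProperSpace X]
    {u : ℕ → X} {p : X} (hd : Tendsto (fun k => dist (u (k + 1)) (u k)) atTop (𝓝 0))
    (hp : MapClusterPt p atTop u) (hfin : {q | MapClusterPt q atTop u}.Finite) :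
    Tendsto u atTop (𝓝 p) := by
  refine tendsto_of_mapClusterPt_of_isolated hd hp ?_
  filter_upwards [(hfin.sdiff (t := {p})).isClosed.isOpen_compl.mem_nhds (by simp)] with q hq hcl
  by_contra hqp
  exact hq ⟨hcl, hqp⟩

end Sequences

def sshopmMap {m n : ℕ} (A : (Fin (m + 1) → Fin n) → ℝ) (α : ℝ) (z : En n) : En n :=
  ‖tvec A z + α • z‖⁻¹ • (tvec A z + α • z)

section FixedPoint

variable {m n : ℕ} {A : (Fin (m + 1) → Fin n) → ℝ} {α : ℝ}

lemma continuous_tvec (A : (Fin (m + 1) → Fin n) → ℝ) : Continuous (tvec A) := by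
  unfold tvec
  fun_prop

lemma continuousAt_sshopmMap {p : En n} (hp : tvec A p + α • p ≠ 0) :
    ContinuousAt (sshopmMap A α) p := by
  have hg : Continuous fun z => tvec A z + α • z :=
    (continuous_tvec A).add (continuous_const_smul α)
  exact (hg.continuousAt.norm.inv₀ (norm_ne_zero_iff.mpr hp)).smul hg.continuousAt

lemma exists_tvec_eq_smul_of_isFixedPt {p : En n} (hp : Function.IsFixedPt (sshopmMap A α) p) :
    ∃ lam : ℝ, tvec A p = lam • p := by
  set g := tvec A p + α • p
  have hgp : g = ‖g‖ • p := by
    rcases eq_or_ne ‖g‖ 0 with h | h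
    · rw [h, zero_smul, ← norm_eq_zero, h]
    · rw [← hp.eq, sshopmMap, smul_inv_smul₀ h]
  exact ⟨‖g‖ - α, by rw [sub_smul, ← hgp, add_sub_cancel_right]⟩

end FixedPoint

section Ascent

variable {m n : ℕ} {A : (Fin (m + 2) → Fin n) → ℝ} {α : ℝ}

lemma tmatSup_lt (hα : beta A < α) : tmatSup A < α := by
  rw [beta_eq_mul_tmatSup] at hα
  nlinarith [tmatSup_nonneg A]

lemma sub_tmatSup_le_inner_tvec_add_smul {z : En n} (hz : ‖z‖ = 1) :
    α - tmatSup A ≤ ⟪z, tvec A z + α • z⟫ := by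
  rw [inner_add_right, ← tmul_contract_eq_inner_tvec, tmul_contract_self, tmul_eq_quadForm,
    inner_smul_right, real_inner_self_eq_norm_sq, hz]
  linarith [(abs_le.mp (abs_quadForm_tmat_le_tmatSup A hz hz)).1]

lemma tvec_add_smul_ne_zero (hα : beta A < α) {z : En n} (hz : ‖z‖ = 1) :
    tvec A z + α • z ≠ 0 := by
  intro h
  have := sub_tmatSup_le_inner_tvec_add_smul (α := α) (A := A) hz
  rw [h, inner_zero_right] at this
  linarith [tmatSup_lt hα]

lemma norm_sshopmMap (hα : beta A < α) {z : En n} (hz : ‖z‖ = 1) : ‖sshopmMap A α z‖ = 1 :=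
  norm_smul_inv_norm (𝕜 := ℝ) (tvec_add_smul_ne_zero hα hz)

lemma mul_sq_le_tmul_sshopmMap_sub (hA : Symm A) (hα : beta A < α) {z : En n} (hz : ‖z‖ = 1) :
    (m + 2) * (α - tmatSup A) / 2 * ‖sshopmMap A α z - z‖ ^ 2 ≤
      tmul A (sshopmMap A α z) - tmul A z := by
  set g := tvec A z + α • z
  set y := sshopmMap A α z
  have hg : g ≠ 0 := tvec_add_smul_ne_zero hα hz
  have hzg : α - tmatSup A ≤ ⟪z, g⟫ := sub_tmatSup_le_inner_tvec_add_smul hz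
  have hgn : α - tmatSup A ≤ ‖g‖ := hzg.trans (by simpa [hz] using real_inner_le_norm z g)
  have hyz : y ≠ -z := by
    intro h
    have hzy : ⟪z, y⟫ = ‖g‖⁻¹ * ⟪z, g⟫ := real_inner_smul_right _ _ _
    rw [h, inner_neg_right, real_inner_self_eq_norm_sq, hz] at hzy
    have : 0 < ‖g‖⁻¹ * ⟪z, g⟫ :=
      mul_pos (inv_pos.mpr (norm_pos_iff.mpr hg)) (by linarith [tmatSup_lt hα])
    linarith
  have hconv := mul_inner_le_tmul_sub hA (tmatSup_nonneg A) (fun u hu => abs_quadForm_tmat_le A hu)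
    (beta_eq_mul_tmatSup A ▸ hα).le hz (norm_sshopmMap hα hz) hyz
  rw [show ⟪y - z, g⟫ = ‖g‖ / 2 * ‖y - z‖ ^ 2 from inner_smul_inv_norm_sub hz hg] at hconv
  refine le_trans ?_ hconv
  calc (m + 2) * (α - tmatSup A) / 2 * ‖y - z‖ ^ 2
      = (m + 2) * ((α - tmatSup A) / 2 * ‖y - z‖ ^ 2) := by ring
    _ ≤ (m + 2) * (‖g‖ / 2 * ‖y - z‖ ^ 2) := by gcongr

end Ascent

/-- SS-HOPM with α > β(A): if A has finitely many unit eigenvectors, the iterates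
converge to a single eigenvector. -/
theorem stmt14 {m n : ℕ} (A : (Fin (m+2) → Fin n) → ℝ) (hA : Symm A)
    (α : ℝ) (hα : α > beta A)
    (x : ℕ → En n) (hx0 : ‖x 0‖ = 1)
    (hiter : ∀ k, x (k+1) = ‖tvec A (x k) + α • x k‖⁻¹ • (tvec A (x k) + α • x k))
    (hfin : {y : En n | ‖y‖ = 1 ∧ ∃ lam : ℝ, tvec A y = lam • y}.Finite) :
    ∃ xstar : En n, Tendsto x atTop (nhds xstar) ∧ ‖xstar‖ = 1 ∧
      ∃ lam : ℝ, tvec A xstar = lam • xstar := by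
  have hunit (k : ℕ) : ‖x k‖ = 1 := by
    induction k with
    | zero => exact hx0
    | succ k ih => exact hiter k ▸ norm_sshopmMap hα ih
  have hd : Tendsto (fun k => dist (x (k + 1)) (x k)) atTop (𝓝 0) := by
    have hc : 0 < (m + 2) * (α - tmatSup A) / 2 := by
      have := sub_pos.mpr (tmatSup_lt hα)
      positivity
    refine tendsto_zero_of_mul_sq_le_sub_succ (L := fun k => tmul A (x k)) hc ⟨tmatSup A, ?_⟩
      fun k => ?_
    · rintro _ ⟨k, rfl⟩
      exact (tmul_eq_quadForm A (x k)).trans_le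
        ((le_abs_self _).trans (abs_quadForm_tmat_le_tmatSup A (hunit k) (hunit k)))
    · rw [dist_eq_norm, hiter k]
      exact mul_sq_le_tmul_sshopmMap_sub hA hα (hunit k)
  have hsphere : map x atTop ≤ 𝓟 (sphere 0 1) :=
    tendsto_principal.mpr (Eventually.of_forall fun k => by simpa using hunit k)
  obtain ⟨p, -, hp⟩ := (isCompact_sphere (0 : En n) 1).exists_mapClusterPt hsphere
  have heig (q : En n) (hq : MapClusterPt q atTop x) :
      ‖q‖ = 1 ∧ ∃ lam : ℝ, tvec A q = lam • q := by
    have hq1 : ‖q‖ = 1 := by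
      simpa using isClosed_sphere.closure_subset
        (mem_closure_iff_clusterPt.mpr (ClusterPt.mono hq hsphere))
    exact ⟨hq1, exists_tvec_eq_smul_of_isFixedPt (hq.isFixedPt_of_tendsto_dist
      (continuousAt_sshopmMap (tvec_add_smul_ne_zero hα hq1)) hiter hd)⟩
  exact ⟨p, tendsto_of_mapClusterPt_of_finite hd hp (hfin.subset heig), heig p hp⟩
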